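/- Let G be a finite non-abelian group and m > 1, ω: G^m → G^m given by (g_1,...,g_m) ↦ (g_1^{-1}g_2,...,g_1^{-1}g_m,g_1^{-1}), and for g = (g_1,...,g_m) ∈ G^m let T_g denote right translation x ↦ x·g on G^m. Then ω^{-1} T_g ω = f_{g_1} ∘ T_{g^ω}, where f_{g_1} is coordinatewise conjugation by g_1: (x_1,...,x_m) ↦ (g_1^{-1}x_1 g_1, ..., g_1^{-1}x_m g_1). In particular, ω is not an automorphism of the group G^m. -/
import Mathlib


namespace CayleyStmt19

variable {G : Type*}

/-- `ω : (g_1,…,g_m) ↦ (g_1⁻¹g_2, g_1⁻¹g_3, …, g_1⁻¹g_m, g_1⁻¹)`. -/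
def om [Group G] (m : ℕ) (g : Fin m → G) : Fin m → G :=
  fun j => (g ⟨0, j.pos⟩)⁻¹ * (if h : j.1 + 1 < m then g ⟨j.1 + 1, h⟩ else 1)

/-- For non-abelian `G`: `ω⁻¹ T_g ω = f_{g_1} ∘ T_{g^ω}` (stated equivalently
as `(x·g)^ω = f_{g_1}(x^ω) · g^ω` for all `x`, where `f_{g_1}` is coordinatewise
conjugation by `g_1`); in particular, `ω` is not a group automorphism of `G^m`. -/
theorem omega_conjugation_formula [Group G] [Fintype G] (m : ℕ) (hm : 1 < m)
    (hG : ∃ a b : G, a * b ≠ b * a) (g : Fin m → G) :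
    (∀ x : Fin m → G,
      om m (x * g) =
        (fun i => (g ⟨0, by omega⟩)⁻¹ * om m x i * g ⟨0, by omega⟩) * om m g) ∧
    ¬ (∀ a b : Fin m → G, om m (a * b) = om m a * om m b) := by
  constructor
  · intro x
    funext j
    simp only [om, Pi.mul_apply]
    by_cases h : j.1 + 1 < m
    · simp [h, mul_assoc]
    · simp [h, mul_assoc]
  · intro H
    obtain ⟨a, b, hab⟩ := hG
    set A : Fin m → G := fun i => if i.1 = 1 then a else 1 with hA
    set B : Fin m → G := fun i => if i.1 = 0 then b⁻¹ else 1 with hB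
    have := congrFun (H A B) ⟨0, by omega⟩
    simp only [om, Pi.mul_apply, hA, hB] at this
    have h1 : 0 + 1 < m := by omega
    rw [dif_pos h1, dif_pos h1, dif_pos h1] at this
    simp at this
    exact hab this.symm
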